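/- Let p = ker(ev_s) ∩ ℂ[M]^W and q = ker(ev_s) ∩ ℂ[M]^{W^s}. Then the inclusion ℂ[M]^W ⊆ ℂ[M]^{W^s} induces an isomorphism of ℂ-algebras between the p-adic completion of ℂ[M]^W and the q-adic completion of ℂ[M]^{W^s}; in other words, the completions of the two invariant rings at the point s coincide. -/

import Mathlib

/-!
Write `R = ℂ[M]`, `I = ker ev_s` and `W_I = W^s`, the stabilizer of `I` in `W`. The inclusion
`R^W ⊆ R^{W_I}` induces an isomorphism of completions once (a) on each invariant ring `C = R^H`
(`H = W, W_I`) the `I`-adic filtration is cofinal with the powers of `I ∩ C`, i.e.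
`I^{cn} ∩ C ⊆ (I ∩ C)^n` for some `c`, and (b) `R^W` is dense in `R^{W_I}` modulo every `I^n`.

For (a): `R` is integral over `C` and `H` permutes the primes over `I ∩ C` transitively, so the
product of the distinct conjugates `h • I` lies in the radical of `(I ∩ C)R`, and by
Noetherianity its `c`-th power lies in `(I ∩ C)R`. An invariant element of `I^{cn}` lies in every
`(h • I)^{cn}`, hence in `(I ∩ C)^n R ∩ C = (I ∩ C)^n`; the last equality holds because the
Reynolds operator is a `C`-linear retraction `R → C`.

For (b): by the Chinese remainder theorem, `b ∈ R^{W_I}` is congruent mod `I^n` to some `c`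
lying in `(w • I)^n` for all conjugates `w • I ≠ I`. In `∑_w w • c`, the terms with `w ∈ W_I`
are `≡ b` and the others are `≡ 0` mod `I^n`, so `|W_I|⁻¹ ∑_w w • c ∈ R^W` approximates `b`.
-/

open scoped Pointwise

theorem Ideal.pow_le_comap_pow {A B : Type*} [CommRing A] [CommRing B] {f : A →+* B}
    {p : Ideal A} {q : Ideal B} (hpq : p ≤ q.comap f) (n : ℕ) : p ^ n ≤ (q ^ n).comap f :=
  (Ideal.pow_right_mono hpq n).trans (Ideal.le_comap_pow f n)

namespace AdicCompletion

variable {A B : Type*} [CommRing A] [CommRing B] {p : Ideal A} {q : Ideal B}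

theorem AdicCauchySequence.sub_mem_pow (s : AdicCauchySequence p A) {m n : ℕ} (hmn : m ≤ n) :
    s.val n - s.val m ∈ p ^ m := by
  have h := (SModEq.sub_mem.mp (s.property hmn))
  rw [← neg_sub, Ideal.smul_eq_mul, Ideal.mul_top] at h
  exact neg_mem_iff.mp h

theorem factorPow_evalₐ (x : AdicCompletion p A) {m n : ℕ} (hmn : m ≤ n) :
    Ideal.Quotient.factorPow p hmn (evalₐ p n x) = evalₐ p m x := by
  obtain ⟨s, rfl⟩ := mk_surjective p A x
  rw [evalₐ_mk, evalₐ_mk, Ideal.Quotient.factor_mk, Ideal.Quotient.eq]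
  exact s.sub_mem_pow hmn

variable (f : A →+* B) (hpq : p ≤ q.comap f)

theorem factorPow_comp_quotientMap_evalₐ {m n : ℕ} (hmn : m ≤ n) :
    (Ideal.Quotient.factorPow q hmn).comp ((Ideal.quotientMap (q ^ n) f
      (Ideal.pow_le_comap_pow hpq n)).comp (evalₐ p n : AdicCompletion p A →+* A ⧸ p ^ n)) =
    (Ideal.quotientMap (q ^ m) f (Ideal.pow_le_comap_pow hpq m)).comp
      (evalₐ p m : AdicCompletion p A →+* A ⧸ p ^ m) := by
  ext x
  obtain ⟨r, hr⟩ := Ideal.Quotient.mk_surjective (evalₐ p n x)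
  simp only [RingHom.comp_apply, RingHom.coe_coe, ← factorPow_evalₐ x hmn, ← hr,
    Ideal.Quotient.factor_mk, Ideal.quotientMap_mk]

noncomputable def mapRingHom : AdicCompletion p A →+* AdicCompletion q B :=
  liftRingHom q _ (factorPow_comp_quotientMap_evalₐ f hpq)

theorem evalₐ_mapRingHom (n : ℕ) (x : AdicCompletion p A) (r : A)
    (hr : evalₐ p n x = Ideal.Quotient.mk _ r) :
    evalₐ q n (mapRingHom f hpq x) = Ideal.Quotient.mk _ (f r) := by
  rw [mapRingHom, evalₐ_liftRingHom, RingHom.comp_apply, RingHom.coe_coe, hr,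
    Ideal.quotientMap_mk]

theorem mapRingHom_of (a : A) : mapRingHom f hpq (of p A a) = of q B (f a) :=
  ext_evalₐ fun n ↦ by rw [evalₐ_mapRingHom f hpq n _ a (evalₐ_of p n a), evalₐ_of]

variable {f} {c : ℕ} (hc : 0 < c) (hf : ∀ n, (q ^ (c * n)).comap f ≤ p ^ n)
include hc hf

theorem mapRingHom_injective : Function.Injective (mapRingHom f hpq) := by
  refine (injective_iff_map_eq_zero _).mpr fun x hx ↦ ext_evalₐ fun n ↦ ?_
  obtain ⟨r, hr⟩ := Ideal.Quotient.mk_surjective (evalₐ p (c * n) x)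
  have hfr : f r ∈ q ^ (c * n) := by
    rw [← Ideal.Quotient.eq_zero_iff_mem, ← evalₐ_mapRingHom f hpq _ x r hr.symm, hx,
      _root_.map_zero]
  rw [_root_.map_zero, ← factorPow_evalₐ x (Nat.le_mul_of_pos_left n hc), ← hr,
    Ideal.Quotient.factor_mk, Ideal.Quotient.eq_zero_iff_mem]
  exact hf n hfr

theorem mapRingHom_surjective
    (hdense : ∀ n, Function.Surjective ((Ideal.Quotient.mk (q ^ n)).comp f)) :
    Function.Surjective (mapRingHom f hpq) := by
  intro y
  obtain ⟨t, rfl⟩ := mk_surjective q B y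
  choose a ha using fun n ↦ hdense (c * n) (Ideal.Quotient.mk _ (t.val (c * n)))
  have happrox : ∀ n, f (a n) - t.val (c * n) ∈ q ^ (c * n) :=
    fun n ↦ Ideal.Quotient.eq.mp (ha n)
  have hcauchy : ∀ {m n : ℕ}, m ≤ n → a n - a m ∈ p ^ m := by
    intro m n hmn
    have hcmn : c * m ≤ c * n := Nat.mul_le_mul_left c hmn
    refine hf m ?_
    rw [Ideal.mem_comap, map_sub, show f (a n) - f (a m) = (f (a n) - t.val (c * n)) -
      (f (a m) - t.val (c * m)) + (t.val (c * n) - t.val (c * m)) by ring]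
    exact add_mem (sub_mem (Ideal.pow_le_pow_right hcmn (happrox n)) (happrox m))
      (t.sub_mem_pow hcmn)
  let s : AdicCauchySequence p A := ⟨a, fun hmn ↦ SModEq.sub_mem.mpr <| by
    rw [Ideal.smul_eq_mul, Ideal.mul_top, ← neg_sub]
    exact neg_mem (hcauchy hmn)⟩
  refine ⟨mk p A s, ext_evalₐ fun n ↦ ?_⟩
  have hn : n ≤ c * n := Nat.le_mul_of_pos_left n hc
  rw [evalₐ_mapRingHom f hpq n _ (a n) (evalₐ_mk p n s), evalₐ_mk, Ideal.Quotient.eq,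
    show f (a n) - t.val n = (f (a n) - t.val (c * n)) + (t.val (c * n) - t.val n) by ring]
  exact add_mem (Ideal.pow_le_pow_right hn (happrox n)) (t.sub_mem_pow hn)

end AdicCompletion

theorem Finset.smul_sum_perm {G R : Type*} [Group G] [Fintype G] [AddCommMonoid R]
    [DistribMulAction G R] (g : G) (x : R) :
    g • ∑ h : G, h • x = ∑ h : G, h • x := by
  rw [Finset.smul_sum]
  exact Fintype.sum_bijective (g * ·) (Group.mulLeft_bijective g) _ _
    fun h ↦ (mul_smul g h x).symm

theorem Ideal.comap_map_of_leftInverse {C R : Type*} [CommRing C] [CommRing R] [Algebra C R]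
    (π : R →ₗ[C] C) (hπ : ∀ c, π (algebraMap C R c) = c) (J : Ideal C) :
    (J.map (algebraMap C R)).comap (algebraMap C R) = J := by
  refine le_antisymm (fun c hc ↦ ?_) Ideal.le_comap_map
  have hJ : ∀ x ∈ J • (⊤ : Submodule C R), π x ∈ J := fun x hx ↦
    Submodule.smul_induction_on hx (fun j hj r _ ↦ by rw [map_smul]; exact J.mul_mem_right _ hj)
      (fun _ _ hx hy ↦ by rw [map_add]; exact J.add_mem hx hy)
  rw [← hπ c]
  exact hJ _ (by rw [Ideal.smul_top_eq_map]; exact hc)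

theorem Ideal.exists_sub_mem_pow_and_mem_pow {R : Type*} [CommRing R] (I : Ideal R)
    (S : Finset (Ideal R)) (hS : ∀ Q ∈ S, IsCoprime I Q) (b : R) (n : ℕ) :
    ∃ c, c - b ∈ I ^ n ∧ ∀ Q ∈ S, c ∈ Q ^ n := by
  obtain ⟨u, hu, e, he, hue⟩ := (IsCoprime.prod_right fun Q hQ ↦ (hS Q hQ).pow :
    IsCoprime (I ^ n) (∏ Q ∈ S, Q ^ n)).exists
  refine ⟨b * e, ?_, fun Q hQ ↦
    Ideal.mul_mem_left _ b (Ideal.prod_le_inf.trans (Finset.inf_le hQ) he)⟩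
  rw [show b * e - b = -(b * u) by linear_combination b * hue]
  exact neg_mem (Ideal.mul_mem_left _ b hu)

section Conjugates

variable {R G : Type*} [CommRing R] [Group G] [MulSemiringAction G R]

theorem Ideal.IsMaximal.smul {I : Ideal R} [I.IsMaximal] (g : G) : (g • I).IsMaximal := by
  rw [Ideal.pointwise_smul_eq_comap]
  exact Ideal.comap_isMaximal_of_surjective _ (RingEquiv.surjective _)

variable (G) [Finite G]

noncomputable def Ideal.conjugates (I : Ideal R) : Finset (Ideal R) :=
  (Set.finite_range fun g : G ↦ g • I).toFinset

variable {G}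

theorem Ideal.mem_conjugates {I Q : Ideal R} : Q ∈ I.conjugates G ↔ ∃ g : G, g • I = Q := by
  simp [Ideal.conjugates]

theorem Ideal.mem_prod_conjugates_pow (I : Ideal R) [I.IsMaximal] {x : R}
    (hx : ∀ g : G, g • x = x) {N : ℕ} (hxI : x ∈ I ^ N) :
    x ∈ (∏ Q ∈ I.conjugates G, Q) ^ N := by
  have hmax : ∀ Q ∈ I.conjugates G, Q.IsMaximal := fun Q hQ ↦ by
    obtain ⟨g, rfl⟩ := Ideal.mem_conjugates.mp hQ
    exact Ideal.IsMaximal.smul g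
  rw [← Finset.prod_pow, Ideal.prod_eq_iInf_of_pairwise_isCoprime]
  · refine Submodule.mem_iInf _ |>.mpr fun Q ↦ Submodule.mem_iInf _ |>.mpr fun hQ ↦ ?_
    obtain ⟨g, rfl⟩ := Ideal.mem_conjugates.mp hQ
    rw [← smul_pow', ← hx g]
    exact Ideal.smul_mem_pointwise_smul g x _ hxI
  · intro Q hQ Q' hQ' hne
    have := hmax Q hQ
    have := hmax Q' hQ'
    exact (Ideal.isCoprime_of_isMaximal hne).pow

theorem Ideal.exists_smul_sub_mem_pow_and_smul_mem_pow (I : Ideal R) [I.IsMaximal] (n : ℕ)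
    {b : R} (hb : ∀ g ∈ MulAction.stabilizer G I, g • b = b) :
    ∃ c : R, (∀ g ∈ MulAction.stabilizer G I, g • c - b ∈ I ^ n) ∧
      ∀ g ∉ MulAction.stabilizer G I, g • c ∈ I ^ n := by
  classical
  obtain ⟨c, hcb, hc⟩ := I.exists_sub_mem_pow_and_mem_pow ((I.conjugates G).erase I)
    (fun Q hQ ↦ by
      obtain ⟨hne, hQ⟩ := Finset.mem_erase.mp hQ
      obtain ⟨g, rfl⟩ := Ideal.mem_conjugates.mp hQ
      have := Ideal.IsMaximal.smul (I := I) g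
      exact Ideal.isCoprime_of_isMaximal hne.symm) b n
  refine ⟨c, fun g hg ↦ ?_, fun g hg ↦ ?_⟩
  · rw [← hb g hg, ← smul_sub, ← MulAction.mem_stabilizer_iff.mp hg, ← smul_pow']
    exact Ideal.smul_mem_pointwise_smul g _ _ hcb
  · have hne : g⁻¹ • I ≠ I := fun h ↦ hg (inv_smul_eq_iff.mp h).symm
    have hc' := hc _ (Finset.mem_erase.mpr ⟨hne, Ideal.mem_conjugates.mpr ⟨g⁻¹, rfl⟩⟩)
    rw [← smul_inv_smul g I, ← smul_pow']
    exact Ideal.smul_mem_pointwise_smul g _ _ hc'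

variable {A : Type*} [CommRing A] [Algebra A R] [SMulCommClass G A R] [Algebra.IsInvariant A R G]

theorem Ideal.prod_conjugates_le_radical_map_under (I : Ideal R) [I.IsMaximal] :
    ∏ Q ∈ I.conjugates G, Q ≤ ((I.under A).map (algebraMap A R)).radical := by
  have := Algebra.IsInvariant.isIntegral A R G
  rw [Ideal.radical_eq_sInf]
  refine le_sInf fun P ⟨hle, hP⟩ ↦ ?_
  have hunder : I.under A = P.under A :=
    Ideal.IsMaximal.eq_of_le inferInstance (Ideal.IsPrime.under A P).ne_top
      (Ideal.map_le_iff_le_comap.mp hle)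
  obtain ⟨g, rfl⟩ := Algebra.IsInvariant.exists_smul_of_under_eq A R G I P hunder
  exact Ideal.prod_le_inf.trans (Finset.inf_le (Ideal.mem_conjugates.mpr ⟨g, rfl⟩))

end Conjugates

section FixedPoints

variable (K : Type*) {R G : Type*} [CommSemiring K] [CommSemiring R] [Algebra K R]
  [Group G] [MulSemiringAction G R] [SMulCommClass G K R]

instance : Algebra.IsInvariant (FixedPoints.subalgebra K R G) R G :=
  ⟨fun b hb ↦ ⟨⟨b, hb⟩, rfl⟩⟩

theorem fixedPoints_subalgebra_le (H : Subgroup G) :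
    FixedPoints.subalgebra K R G ≤ FixedPoints.subalgebra K R H :=
  fun _ hx h ↦ hx h

end FixedPoints

section Invariants

variable (K : Type*) {R G : Type*} [Field K] [CharZero K] [CommRing R] [Algebra K R]
  [Group G] [MulSemiringAction G R] [SMulCommClass G K R]

noncomputable def reynolds [Fintype G] :
    R →ₗ[FixedPoints.subalgebra K R G] FixedPoints.subalgebra K R G where
  toFun x := ⟨(Fintype.card G : K)⁻¹ • ∑ g : G, g • x, fun g ↦ by
    rw [smul_comm, Finset.smul_sum_perm]⟩
  map_add' x y := by ext; simp [Finset.sum_add_distrib]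
  map_smul' c x := by
    ext
    simp only [Subalgebra.smul_def, smul_eq_mul, RingHom.id_apply, Subalgebra.coe_mul, smul_mul',
      c.2 _, Finset.mul_sum, mul_smul_comm]

theorem reynolds_algebraMap [Fintype G] (c : FixedPoints.subalgebra K R G) :
    reynolds K (algebraMap _ R c) = c := by
  ext
  change (Fintype.card G : K)⁻¹ • ∑ g : G, g • (c : R) = c
  have hcard : (Fintype.card G : K) ≠ 0 := Nat.cast_ne_zero.mpr Fintype.card_ne_zero
  simp only [c.2 _, Finset.sum_const, Finset.card_univ, ← Nat.cast_smul_eq_nsmul K, smul_smul,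
    inv_mul_cancel₀ hcard, one_smul]

variable [Finite G]

theorem comap_map_algebraMap_fixedPoints (J : Ideal (FixedPoints.subalgebra K R G)) :
    (J.map (algebraMap _ R)).comap (algebraMap _ R) = J := by
  cases nonempty_fintype G
  exact Ideal.comap_map_of_leftInverse (reynolds (R := R) (G := G) K) (reynolds_algebraMap K) J

theorem exists_comap_pow_mul_le_pow_comap [IsNoetherianRing R] (I : Ideal R) [I.IsMaximal] :
    ∃ c, 0 < c ∧ ∀ n, (I ^ (c * n)).comap (algebraMap (FixedPoints.subalgebra K R G) R) ≤
      (I.comap (algebraMap (FixedPoints.subalgebra K R G) R)) ^ n := by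
  set f := algebraMap (FixedPoints.subalgebra K R G) R
  obtain ⟨k, hk⟩ := Ideal.exists_pow_le_of_le_radical_of_fg
    (I.prod_conjugates_le_radical_map_under (A := FixedPoints.subalgebra K R G) (G := G))
    (IsNoetherian.noetherian _)
  refine ⟨k + 1, k.succ_pos, fun n a ha ↦ ?_⟩
  have hmem := I.mem_prod_conjugates_pow (G := G) (fun g ↦ a.2 g) ha
  rw [pow_mul] at hmem
  have hle : (∏ Q ∈ I.conjugates G, Q) ^ (k + 1) ≤ (I.under _).map f :=
    (Ideal.pow_le_pow_right k.le_succ).trans hk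
  rw [← comap_map_algebraMap_fixedPoints K (I.comap f ^ n), Ideal.mem_comap, Ideal.map_pow]
  exact Ideal.pow_right_mono hle n hmem

theorem exists_mem_fixedPoints_sub_mem_pow (I : Ideal R) [I.IsMaximal] (n : ℕ) {b : R}
    (hb : b ∈ FixedPoints.subalgebra K R (MulAction.stabilizer G I)) :
    ∃ a ∈ FixedPoints.subalgebra K R G, b - a ∈ I ^ n := by
  classical
  cases nonempty_fintype G
  obtain ⟨c, hstab, hmove⟩ :=
    I.exists_smul_sub_mem_pow_and_smul_mem_pow n fun g hg ↦ hb ⟨g, hg⟩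
  set k := (Finset.univ.filter (· ∈ MulAction.stabilizer G I)).card
  have hsum : ∑ g : G, g • c - k • b ∈ I ^ n := by
    rw [show k • b = ∑ g : G, if g ∈ MulAction.stabilizer G I then b else 0 by
      rw [Finset.sum_ite, Finset.sum_const_zero, add_zero, Finset.sum_const],
      ← Finset.sum_sub_distrib]
    refine Ideal.sum_mem _ fun g _ ↦ ?_
    split_ifs with hg
    · exact hstab g hg
    · simpa only [sub_zero] using hmove g hg
  have hk : (k : K) ≠ 0 := Nat.cast_ne_zero.mpr (Finset.card_ne_zero_of_mem
    (Finset.mem_filter.mpr ⟨Finset.mem_univ 1, one_mem _⟩))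
  refine ⟨(k : K)⁻¹ • ∑ g : G, g • c, fun g ↦ by rw [smul_comm, Finset.smul_sum_perm], ?_⟩
  rw [show b - (k : K)⁻¹ • ∑ g : G, g • c = -((k : K)⁻¹ • (∑ g : G, g • c - k • b)) by
    rw [smul_sub, ← Nat.cast_smul_eq_nsmul K, smul_smul, inv_mul_cancel₀ hk, one_smul, neg_sub]]
  exact neg_mem (Submodule.smul_of_tower_mem _ _ hsum)

theorem exists_ringEquiv_adicCompletion_fixedPoints [IsNoetherianRing R] (I : Ideal R)
    [I.IsMaximal] :
    ∃ e : AdicCompletion (I.comap (algebraMap (FixedPoints.subalgebra K R G) R))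
        (FixedPoints.subalgebra K R G) ≃+*
      AdicCompletion
        (I.comap (algebraMap (FixedPoints.subalgebra K R (MulAction.stabilizer G I)) R))
        (FixedPoints.subalgebra K R (MulAction.stabilizer G I)),
      ∀ a, e (AdicCompletion.of _ _ a) =
        AdicCompletion.of _ _ (Subalgebra.inclusion (fixedPoints_subalgebra_le K _) a) := by
  obtain ⟨c, hc, hcA⟩ := exists_comap_pow_mul_le_pow_comap K (G := G) I
  obtain ⟨d, -, hdB⟩ := exists_comap_pow_mul_le_pow_comap K (G := MulAction.stabilizer G I) I
  set f := (Subalgebra.inclusion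
    (fixedPoints_subalgebra_le K (R := R) (MulAction.stabilizer G I))).toRingHom
  have hpq : I.comap (algebraMap _ R) ≤ (I.comap (algebraMap _ R)).comap f := fun _ ha ↦ ha
  have hinj (n : ℕ) :
      ((I.comap (algebraMap _ R)) ^ (c * n)).comap f ≤ I.comap (algebraMap _ R) ^ n :=
    fun a ha ↦ hcA n (Ideal.le_comap_pow
      (algebraMap (FixedPoints.subalgebra K R (MulAction.stabilizer G I)) R) _ ha)
  have hdense : ∀ n, Function.Surjective
      ((Ideal.Quotient.mk (I.comap (algebraMap _ R) ^ n)).comp f) := fun n y ↦ by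
    obtain ⟨b, rfl⟩ := Ideal.Quotient.mk_surjective y
    obtain ⟨a, ha, hba⟩ := exists_mem_fixedPoints_sub_mem_pow K I (d * n) b.2
    refine ⟨⟨a, ha⟩, Ideal.Quotient.eq.mpr (hdB n ?_)⟩
    rw [Ideal.mem_comap, ← neg_sub]
    exact neg_mem hba
  exact ⟨RingEquiv.ofBijective (AdicCompletion.mapRingHom f hpq)
    ⟨AdicCompletion.mapRingHom_injective hpq hc hinj,
      AdicCompletion.mapRingHom_surjective hpq hc hinj hdense⟩,
    AdicCompletion.mapRingHom_of f hpq⟩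

end Invariants

theorem smul_ker_eq_ker_iff {K R G : Type*} [CommRing K] [CommRing R] [Algebra K R] [Group G]
    [MulSemiringAction G R] [SMulCommClass G K R] (φ : R →ₐ[K] K) (g : G) :
    g • RingHom.ker φ = RingHom.ker φ ↔ φ.comp (MulSemiringAction.toAlgHom K R g) = φ := by
  refine ⟨fun h ↦ AlgHom.ext fun x ↦ ?_, fun h ↦ Ideal.ext fun x ↦ ?_⟩
  · have hx : x - algebraMap K R (φ x) ∈ g⁻¹ • RingHom.ker φ := by
      rw [inv_smul_eq_iff.mpr h.symm, RingHom.mem_ker, map_sub, AlgHom.commutes,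
        Algebra.algebraMap_self, RingHom.id_apply, sub_self]
    rw [Ideal.mem_inv_pointwise_smul_iff, smul_sub, smul_algebraMap, RingHom.mem_ker, map_sub,
      AlgHom.commutes, Algebra.algebraMap_self, RingHom.id_apply, sub_eq_zero] at hx
    exact hx
  · have hφ : φ (g⁻¹ • x) = φ x := by
      simpa using (AlgHom.congr_fun h (g⁻¹ • x)).symm
    rw [Ideal.mem_pointwise_smul_iff_inv_smul_mem, RingHom.mem_ker, RingHom.mem_ker, hφ]

namespace MonoidAlgebra

theorem isNoetherianRing_of_moduleFinite (k M : Type*) [CommRing k] [IsNoetherianRing k]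
    [CommGroup M] [Module.Finite ℤ (Additive M)] : IsNoetherianRing (MonoidAlgebra k M) :=
  have : Monoid.FG M := Monoid.fg_iff_add_fg.mpr
    (AddGroup.fg_iff_addMonoid_fg.mp (Module.Finite.iff_addGroup_fg.mp ‹_›))
  Algebra.FiniteType.isNoetherianRing k _

noncomputable abbrev domMulSemiringAction (k M W : Type*) [CommSemiring k] [Monoid M] [Group W]
    [MulDistribMulAction W M] : MulSemiringAction W (MonoidAlgebra k M) :=
  MulSemiringAction.compHom _
    ((domCongrAut (R := k) (A := k) (M := M)).comp (MulDistribMulAction.toMulAut W M))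

attribute [local instance] domMulSemiringAction

section

variable {k M W : Type*} [CommSemiring k] [Monoid M] [Group W] [MulDistribMulAction W M]

theorem coeff_domSMul (w : W) (f : MonoidAlgebra k M) (m : M) :
    (w • f).coeff m = f.coeff (w⁻¹ • m) :=
  coeff_domCongr _ _ _

theorem domSMul_of (w : W) (m : M) : w • of k M m = of k M (w • m) :=
  domCongr_single _ _ _

theorem domSMul_eq_self_iff (w : W) (f : MonoidAlgebra k M) :
    w • f = f ↔ ∀ m, f.coeff (w • m) = f.coeff m := by
  rw [MonoidAlgebra.ext_iff, Finsupp.ext_iff]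
  refine ⟨fun h m ↦ ?_, fun h m ↦ ?_⟩
  · rw [← h, coeff_domSMul, inv_smul_smul]
  · rw [coeff_domSMul, ← h, smul_inv_smul]

instance : SMulCommClass W k (MonoidAlgebra k M) :=
  ⟨fun w c f ↦ map_smul (domCongr k k (MulDistribMulAction.toMulAut W M w)) c f⟩

end

theorem mem_stabilizer_ker_iff {k M W : Type*} [CommRing k] [CommMonoid M] [Group W]
    [MulDistribMulAction W M] (φ : MonoidAlgebra k M →ₐ[k] k) (w : W) :
    w ∈ MulAction.stabilizer W (RingHom.ker φ) ↔
      ∀ m, φ (of k M (w • m)) = φ (of k M m) := by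
  rw [MulAction.mem_stabilizer_iff, smul_ker_eq_ker_iff]
  refine ⟨fun h m ↦ ?_, fun h ↦ algHom_ext (fun m ↦ ?_) (Subsingleton.elim _ _)⟩
  · rw [← domSMul_of]
    exact AlgHom.congr_fun h _
  · exact (congrArg φ (domSMul_of w m)).trans (h m)

end MonoidAlgebra

attribute [local instance] MonoidAlgebra.domMulSemiringAction

theorem invariants_completions_agree_at_point_general
    -- M: a finitely generated free abelian group (written multiplicatively)
    (M : Type*) [CommGroup M] [Module.Finite ℤ (Additive M)]
    -- the point s, a homomorphism M →* ℂˣ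
    (s : M →* ℂˣ)
    -- W: a finite group acting on M by group automorphisms
    (W : Type*) [Group W] [Finite W] [MulDistribMulAction W M]
    -- ev_s : ℂ[M] → ℂ, the evaluation at s (e^λ ↦ s(λ))
    (evs : MonoidAlgebra ℂ M →ₐ[ℂ] ℂ)
    (hevs : ∀ m : M, evs (MonoidAlgebra.of ℂ M m) = s m)
    -- A = ℂ[M]^W and B = ℂ[M]^{W^s}, where W^s is the stabilizer of s in W
    (A B : Subalgebra ℂ (MonoidAlgebra ℂ M))
    (hA : ∀ f : MonoidAlgebra ℂ M,
      f ∈ A ↔ ∀ (w : W) (m : M), f.coeff (w • m) = f.coeff m)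
    (hB : ∀ f : MonoidAlgebra ℂ M,
      f ∈ B ↔ ∀ w : W, (∀ m : M, s (w • m) = s m) → ∀ m : M, f.coeff (w • m) = f.coeff m)
    (hAB : A ≤ B)
    -- the primes p = ker(ev_s) ∩ A and q = ker(ev_s) ∩ B
    (p : Ideal A) (q : Ideal B)
    (hp : p = (RingHom.ker evs.toRingHom).comap A.val.toRingHom)
    (hq : q = (RingHom.ker evs.toRingHom).comap B.val.toRingHom) :
    -- the inclusion induces a ℂ-algebra isomorphism of the adic completions
    letI : Algebra ℂ (AdicCompletion p A) :=
      ((algebraMap A (AdicCompletion p A)).comp (algebraMap ℂ A)).toAlgebra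
    letI : Algebra ℂ (AdicCompletion q B) :=
      ((algebraMap B (AdicCompletion q B)).comp (algebraMap ℂ B)).toAlgebra
    ∃ e : AdicCompletion p A ≃ₐ[ℂ] AdicCompletion q B,
      ∀ a : A, e (AdicCompletion.of p A a) =
        AdicCompletion.of q B (Subalgebra.inclusion hAB a) := by
  have := MonoidAlgebra.isNoetherianRing_of_moduleFinite ℂ M
  set I := RingHom.ker evs.toRingHom
  have : I.IsMaximal := RingHom.ker_isMaximal_of_surjective _
    fun z ↦ ⟨algebraMap ℂ _ z, evs.commutes z⟩
  have hstab (w : W) : w ∈ MulAction.stabilizer W I ↔ ∀ m, s (w • m) = s m :=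
    (MonoidAlgebra.mem_stabilizer_ker_iff evs w).trans
      (forall_congr' fun m ↦ by rw [hevs, hevs, Units.ext_iff])
  have hA' : A = FixedPoints.subalgebra ℂ _ W := Subalgebra.ext fun f ↦
    (hA f).trans (forall_congr' fun w ↦ (MonoidAlgebra.domSMul_eq_self_iff w f).symm)
  have hB' : B = FixedPoints.subalgebra ℂ _ (MulAction.stabilizer W I) :=
    Subalgebra.ext fun f ↦ (hB f).trans
      ⟨fun h w ↦ (MonoidAlgebra.domSMul_eq_self_iff _ f).mpr (h w ((hstab w).mp w.2)),
        fun h w hw ↦ (MonoidAlgebra.domSMul_eq_self_iff w f).mp (h ⟨w, (hstab w).mpr hw⟩)⟩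
  subst hA' hB' hp hq
  obtain ⟨e, he⟩ := exists_ringEquiv_adicCompletion_fixedPoints ℂ (G := W) I
  -- `(_)` makes the two algebra structures unify with those of the statement instead of being
  -- synthesized as `AdicCompletion.instAlgebra`.
  exact ⟨@AlgEquiv.ofRingEquiv ℂ _ _ _ _ _ (_) (_) e fun z ↦
    (he _).trans (congrArg _ (AlgHom.commutes _ z)), he⟩

/-- The inclusion `ℂ[M]^W ⊆ ℂ[M]^{W^s}` induces an isomorphism of ℂ-algebras between
the completion of `ℂ[M]^W` at the prime `p = ker(ev_s) ∩ ℂ[M]^W` and the completion of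
`ℂ[M]^{W^s}` at the prime `q = ker(ev_s) ∩ ℂ[M]^{W^s}`: the completions of the two
invariant rings at the point `s` coincide. -/
theorem invariants_completions_agree_at_point
    -- M: a finitely generated free abelian group (written multiplicatively)
    (M : Type*) [CommGroup M] [Module.Free ℤ (Additive M)] [Module.Finite ℤ (Additive M)]
    -- the point s, a homomorphism M →* ℂˣ
    (s : M →* ℂˣ)
    -- W: a finite group acting on M by group automorphisms
    (W : Type*) [Group W] [Finite W] [MulDistribMulAction W M]
    -- ev_s : ℂ[M] → ℂ, the evaluation at s (e^λ ↦ s(λ))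
    (evs : MonoidAlgebra ℂ M →ₐ[ℂ] ℂ)
    (hevs : ∀ m : M, evs (MonoidAlgebra.of ℂ M m) = s m)
    -- A = ℂ[M]^W and B = ℂ[M]^{W^s}, where W^s is the stabilizer of s in W
    (A B : Subalgebra ℂ (MonoidAlgebra ℂ M))
    (hA : ∀ f : MonoidAlgebra ℂ M,
      f ∈ A ↔ ∀ (w : W) (m : M), f.coeff (w • m) = f.coeff m)
    (hB : ∀ f : MonoidAlgebra ℂ M,
      f ∈ B ↔ ∀ w : W, (∀ m : M, s (w • m) = s m) → ∀ m : M, f.coeff (w • m) = f.coeff m)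
    (hAB : A ≤ B)
    -- the primes p = ker(ev_s) ∩ A and q = ker(ev_s) ∩ B
    (p : Ideal A) (q : Ideal B)
    (hp : p = (RingHom.ker evs.toRingHom).comap A.val.toRingHom)
    (hq : q = (RingHom.ker evs.toRingHom).comap B.val.toRingHom) :
    -- the inclusion induces a ℂ-algebra isomorphism of the adic completions
    letI : Algebra ℂ (AdicCompletion p A) :=
      ((algebraMap A (AdicCompletion p A)).comp (algebraMap ℂ A)).toAlgebra
    letI : Algebra ℂ (AdicCompletion q B) :=
      ((algebraMap B (AdicCompletion q B)).comp (algebraMap ℂ B)).toAlgebra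
    ∃ e : AdicCompletion p A ≃ₐ[ℂ] AdicCompletion q B,
      ∀ a : A, e (AdicCompletion.of p A a) =
        AdicCompletion.of q B (Subalgebra.inclusion hAB a) :=
  invariants_completions_agree_at_point_general M s W evs hevs A B hA hB hAB p q hp hq
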